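/- Let X be a Hilbert space, F : X → X a bounded operator admitting a factorization F = H*TH where T is coercive on Range(H) with constant c, and let φ_z = H*h_z for some h_z ∈ Y with h_z ≠ 0 and ‖φ_z‖² = S. Then ‖Fφ_z‖² ≥ c² S³ / ‖h_z‖⁴. -/
import Mathlib


open scoped InnerProductSpace

/-- Lower bound I(z) = ‖Fφ_z‖² ≥ c²S³/‖h_z‖⁴ for φ_z = H*h_z in the range of H*. -/
theorem imaging_functional_positive_lower_bound
    {X Y : Type*} [NormedAddCommGroup X] [InnerProductSpace ℂ X] [CompleteSpace X]
    [NormedAddCommGroup Y] [InnerProductSpace ℂ Y] [CompleteSpace Y]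
    (H : X →L[ℂ] Y) (T : Y →L[ℂ] Y) (F : X →L[ℂ] X)
    (hF : F = (ContinuousLinearMap.adjoint H).comp (T.comp H))
    (c : ℝ) (hc : 0 < c)
    (hT : ∀ f ∈ Set.range H, ‖(⟪T f, f⟫_ℂ : ℂ)‖ ≥ c * ‖f‖ ^ 2)
    (h : Y) (hh : h ≠ 0) (φ : X) (hφ : φ = ContinuousLinearMap.adjoint H h)
    (S : ℝ) (hS : ‖φ‖ ^ 2 = S) :
    ‖F φ‖ ^ 2 ≥ c ^ 2 * S ^ 3 / ‖h‖ ^ 4 := by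
  have hhn : (0:ℝ) < ‖h‖ := norm_pos_iff.mpr hh
  -- key inner product identity
  have key : (⟪F φ, φ⟫_ℂ : ℂ) = ⟪T (H φ), H φ⟫_ℂ := by
    rw [hF]
    simp [ContinuousLinearMap.adjoint_inner_left]
  have h1 : ‖F φ‖ * ‖φ‖ ≥ c * ‖H φ‖ ^ 2 := by
    calc ‖F φ‖ * ‖φ‖ ≥ ‖(⟪F φ, φ⟫_ℂ : ℂ)‖ := norm_inner_le_norm _ _
    _ = ‖(⟪T (H φ), H φ⟫_ℂ : ℂ)‖ := by rw [key]
    _ ≥ c * ‖H φ‖ ^ 2 := hT (H φ) ⟨φ, rfl⟩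
  have h2 : S ≤ ‖h‖ * ‖H φ‖ := by
    have : (⟪φ, φ⟫_ℂ : ℂ) = ⟪h, H φ⟫_ℂ := by
      nth_rewrite 1 [hφ]
      rw [ContinuousLinearMap.adjoint_inner_left]
    calc S = ‖φ‖ ^ 2 := hS.symm
    _ = ‖(⟪φ, φ⟫_ℂ : ℂ)‖ := by rw [inner_self_eq_norm_sq_to_K]; simp [sq_abs]
    _ = ‖(⟪h, H φ⟫_ℂ : ℂ)‖ := by rw [this]
    _ ≤ ‖h‖ * ‖H φ‖ := norm_inner_le_norm _ _
  have hSnn : 0 ≤ S := hS ▸ sq_nonneg _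
  rcases eq_or_lt_of_le hSnn with hS0 | hSpos
  · rw [← hS0]
    simp [pow_succ]
    positivity
  · rw [ge_iff_le, div_le_iff₀ (by positivity)]
    have hn : 0 ≤ ‖H φ‖ := norm_nonneg _
    have e1 : ‖F φ‖ ^ 2 * S ≥ c ^ 2 * ‖H φ‖ ^ 4 := by
      have := mul_self_le_mul_self (by positivity : (0:ℝ) ≤ c * ‖H φ‖ ^ 2) h1
      nlinarith [hS]
    have e2 : ‖h‖ ^ 2 * ‖H φ‖ ^ 2 ≥ S ^ 2 := by
      have := mul_self_le_mul_self hSnn h2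
      nlinarith
    have e3 : c ^ 2 * ‖H φ‖ ^ 4 * ‖h‖ ^ 4 ≥ c ^ 2 * S ^ 4 := by
      have := mul_self_le_mul_self (by positivity : (0:ℝ) ≤ S ^ 2) e2
      nlinarith [sq_nonneg c]
    have e4 : ‖F φ‖ ^ 2 * S * ‖h‖ ^ 4 ≥ c ^ 2 * S ^ 4 := by
      have := mul_le_mul_of_nonneg_right e1 (by positivity : (0:ℝ) ≤ ‖h‖ ^ 4)
      linarith
    apply le_of_mul_le_mul_right _ hSpos
    nlinarith [e4]
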